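/- arXiv:1508.02652 — 2 statements merged into one kernel-verified Lean document; each statement's English description precedes it below -/
import Mathlib

section
/- For any smooth function f: ℍ → ℂ, any γ = (a b; c d) ∈ SL(2,ℝ), and any integer k, one has ξ_k((cz+d)^{−k} f(γ·z)) = (cz+d)^{k−2} (ξ_k f)(γ·z), where γ·z = (az+b)/(cz+d). -/
open Complex

noncomputable def pderivX (f : ℂ → ℂ) (z : ℂ) : ℂ := fderiv ℝ f z 1

noncomputable def pderivY (f : ℂ → ℂ) (z : ℂ) : ℂ := fderiv ℝ f z Complex.I

/-- The Wirtinger derivative `∂/∂z̄ = (1/2)(∂/∂x + i ∂/∂y)`. -/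
noncomputable def dbar (f : ℂ → ℂ) (z : ℂ) : ℂ :=
  (1 / 2) * (pderivX f z + Complex.I * pderivY f z)

/-- The Bruinier–Funke operator `ξ_k(f)(z) = 2 i y^k · conj(∂f/∂z̄)`. -/
noncomputable def xiOp (k : ℤ) (f : ℂ → ℂ) (z : ℂ) : ℂ :=
  2 * Complex.I * ((z.im : ℂ)) ^ k * (starRingEnd ℂ) (dbar f z)

lemma xi_aux (k : ℤ) (f : ℂ → ℂ) (hf : ContDiff ℝ (⊤ : ℕ∞) f)
    (a b c d : ℝ) (hdet : a * d - b * c = 1) (z : ℂ) (hz : 0 < z.im) :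
    xiOp k (fun w => ((c:ℂ) * w + d) ^ (-k) * f (((a:ℂ) * w + b) / ((c:ℂ) * w + d))) z
      = ((c:ℂ) * z + d) ^ (k - 2) * xiOp k f (((a:ℂ) * z + b) / ((c:ℂ) * z + d)) := by
  have hcd : (c:ℂ) * z + d ≠ 0 := by
    intro h
    rcases eq_or_ne c 0 with hc | hc
    · have hd : (d:ℂ) = 0 := by simpa [hc] using h
      have : d = 0 := by exact_mod_cast hd
      rw [hc, this] at hdet; simp at hdet
    · have him : ((c:ℂ) * z + d).im = c * z.im := by simp
      rw [h] at him
      simp at him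
      rcases him with h1 | h2
      · exact hc h1
      · exact absurd h2 hz.ne'
  have hden : HasDerivAt (fun w : ℂ => (c:ℂ) * w + d) (c:ℂ) z := by
    simpa using ((hasDerivAt_id z).const_mul (c:ℂ)).add_const (d:ℂ)
  have hnum : HasDerivAt (fun w : ℂ => (a:ℂ) * w + b) (a:ℂ) z := by
    simpa using ((hasDerivAt_id z).const_mul (a:ℂ)).add_const (b:ℂ)
  have hnum1 : (a:ℂ) * ((c:ℂ) * z + d) - ((a:ℂ) * z + b) * c = 1 := by
    have h2 : ((a:ℂ)) * d - (b:ℂ) * c = 1 := by exact_mod_cast congrArg (fun t : ℝ => (t:ℂ)) hdet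
    linear_combination h2
  set m : ℂ := (((c:ℂ) * z + d) ^ 2)⁻¹ with hmdef
  have hM : HasDerivAt (fun w : ℂ => ((a:ℂ) * w + b) / ((c:ℂ) * w + d)) m z := by
    have h := hnum.div hden hcd
    rw [hnum1] at h
    simpa [one_div, Pi.div_def] using h
  set H' : ℂ := (-k : ℂ) * ((c:ℂ) * z + d) ^ (-k - 1) * c with hH'def
  have hH : HasDerivAt (fun w : ℂ => ((c:ℂ) * w + d) ^ (-k)) H' z := by
    have h0 := (hasDerivAt_zpow (-k) _ (Or.inl hcd)).comp z hden
    have h : HasDerivAt (fun w : ℂ => ((c:ℂ) * w + d) ^ (-k)) (((-k : ℤ) : ℂ) * ((c:ℂ) * z + d) ^ (-k - 1) * c) z := h0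
    convert h using 1
    push_cast
    ring
  set w₀ : ℂ := ((a:ℂ) * z + b) / ((c:ℂ) * z + d) with hw0
  have hfdiff : DifferentiableAt ℝ f w₀ := (hf.differentiable (by simp)).differentiableAt
  set Df : ℂ →L[ℝ] ℂ := fderiv ℝ f w₀ with hDfdef
  have hfD : HasFDerivAt f Df w₀ := hfdiff.hasFDerivAt
  set D' : ℂ →L[ℝ] ℂ := Df.comp (((1 : ℂ →L[ℂ] ℂ).smulRight m).restrictScalars ℝ) with hD'def
  have hcomp : HasFDerivAt (fun w => f (((a:ℂ) * w + b) / ((c:ℂ) * w + d))) D' z := by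
    exact HasFDerivAt.comp z hfD (hM.hasFDerivAt.restrictScalars ℝ)
  set Hm : ℂ →L[ℝ] ℂ := ((1 : ℂ →L[ℂ] ℂ).smulRight H').restrictScalars ℝ with hHmdef
  have hHf : HasFDerivAt (fun w : ℂ => ((c:ℂ) * w + d) ^ (-k)) Hm z :=
    hH.hasFDerivAt.restrictScalars ℝ
  have hg : HasFDerivAt
      (fun w => ((c:ℂ) * w + d) ^ (-k) * f (((a:ℂ) * w + b) / ((c:ℂ) * w + d)))
      ((((c:ℂ) * z + d) ^ (-k)) • D' + f w₀ • Hm) z := hHf.mul hcomp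
  have hgf := hg.fderiv
  -- values of the derivative
  have eX : pderivX (fun w => ((c:ℂ) * w + d) ^ (-k) * f (((a:ℂ) * w + b) / ((c:ℂ) * w + d))) z
      = ((c:ℂ) * z + d) ^ (-k) * Df m + f w₀ * H' := by
    simp only [pderivX]
    rw [hgf]
    simp only [hD'def, hHmdef]
    simp only [ContinuousLinearMap.add_apply, ContinuousLinearMap.smul_apply,
      ContinuousLinearMap.coe_comp', Function.comp_apply,
      ContinuousLinearMap.coe_restrictScalars', ContinuousLinearMap.smulRight_apply,
      ContinuousLinearMap.one_apply, smul_eq_mul, one_mul]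
  have eY : pderivY (fun w => ((c:ℂ) * w + d) ^ (-k) * f (((a:ℂ) * w + b) / ((c:ℂ) * w + d))) z
      = ((c:ℂ) * z + d) ^ (-k) * Df (I * m) + f w₀ * (I * H') := by
    simp only [pderivY]
    rw [hgf]
    simp only [hD'def, hHmdef]
    simp only [ContinuousLinearMap.add_apply, ContinuousLinearMap.smul_apply,
      ContinuousLinearMap.coe_comp', Function.comp_apply,
      ContinuousLinearMap.coe_restrictScalars', ContinuousLinearMap.smulRight_apply,
      ContinuousLinearMap.one_apply, smul_eq_mul, one_mul]
  -- decomposition of the real-linear map Df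
  have key : ∀ u : ℂ, Df u = (u.re : ℂ) * Df 1 + (u.im : ℂ) * Df I := by
    intro u
    have hu : u = (u.re : ℝ) • (1:ℂ) + (u.im : ℝ) • I := by
      simp [Complex.real_smul]
    conv_lhs => rw [hu]
    rw [map_add, map_smul, map_smul]
    simp [Complex.real_smul]
  have keyI : Df (I * m) = (m.re : ℂ) * Df I - (m.im : ℂ) * Df 1 := by
    rw [key (I * m)]
    simp only [Complex.mul_re, Complex.mul_im, Complex.I_re, Complex.I_im]
    push_cast
    ring
  have hconjm : (starRingEnd ℂ) m = (m.re : ℂ) - (m.im : ℂ) * I := by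
    apply Complex.ext <;> simp
  have hdbar : dbar (fun w => ((c:ℂ) * w + d) ^ (-k) * f (((a:ℂ) * w + b) / ((c:ℂ) * w + d))) z
      = ((c:ℂ) * z + d) ^ (-k) * (starRingEnd ℂ) m * dbar f w₀ := by
    simp only [dbar]
    rw [eX, eY, key m, keyI, hconjm]
    simp only [pderivX, pderivY, ← hDfdef]
    linear_combination (((c:ℂ) * z + d) ^ (-k) * (m.im : ℂ) * Df I / 2 + f w₀ * H' / 2) * Complex.I_sq
  have hconj : (starRingEnd ℂ) (dbar (fun w => ((c:ℂ) * w + d) ^ (-k) * f (((a:ℂ) * w + b) / ((c:ℂ) * w + d))) z)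
      = ((starRingEnd ℂ) ((c:ℂ) * z + d)) ^ (-k) * m * (starRingEnd ℂ) (dbar f w₀) := by
    rw [hdbar, map_mul, map_mul, map_zpow₀, Complex.conj_conj]
  have hN : Complex.normSq ((c:ℂ) * z + d) ≠ 0 := fun h => hcd (Complex.normSq_eq_zero.mp h)
  have him : w₀.im = z.im / Complex.normSq ((c:ℂ) * z + d) := by
    rw [hw0, Complex.div_im, ← sub_div]
    congr 1
    simp only [Complex.add_im, Complex.add_re, Complex.mul_im, Complex.mul_re, Complex.ofReal_re,
      Complex.ofReal_im]
    linear_combination z.im * hdet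
  have hpow : ((w₀.im : ℝ) : ℂ) ^ k
      = (z.im : ℂ) ^ k * ((c:ℂ) * z + d) ^ (-k) * ((starRingEnd ℂ) ((c:ℂ) * z + d)) ^ (-k) := by
    rw [him]
    push_cast
    rw [div_zpow, show ((Complex.normSq ((c:ℂ) * z + d) : ℝ) : ℂ)
        = ((c:ℂ) * z + d) * (starRingEnd ℂ) ((c:ℂ) * z + d) from (Complex.mul_conj _).symm,
      mul_zpow, zpow_neg, zpow_neg, div_eq_mul_inv, mul_inv]
    ring
  have h2 : ((c:ℂ) * z + d) ^ (k - 2) * ((c:ℂ) * z + d) ^ (-k) = m := by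
    rw [hmdef, ← zpow_add₀ hcd, show k - 2 + -k = -2 by ring, zpow_neg]
    norm_num
  have hkey : ((starRingEnd ℂ) ((c:ℂ) * z + d)) ^ (-k) * m
      = ((c:ℂ) * z + d) ^ (k - 2) * (((c:ℂ) * z + d) ^ (-k) * ((starRingEnd ℂ) ((c:ℂ) * z + d)) ^ (-k)) := by
    linear_combination (-((starRingEnd ℂ) ((c:ℂ) * z + d)) ^ (-k)) * h2
  simp only [xiOp]
  rw [hconj, hpow]
  linear_combination (2 * I * (z.im : ℂ) ^ k * (starRingEnd ℂ) (dbar f w₀)) * hkey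

/-- Equivariance of the `ξ_k` operator:
`ξ_k((cz+d)^{−k} f(γ·z)) = (cz+d)^{k−2} (ξ_k f)(γ·z)` for `γ ∈ SL(2,ℝ)`. -/
theorem xiOp_slash_commute (k : ℤ) (f : ℂ → ℂ) (hf : ContDiff ℝ (⊤ : ℕ∞) f)
    (γ : Matrix.SpecialLinearGroup (Fin 2) ℝ) (z : ℂ) (hz : 0 < z.im) :
    (letI a : ℂ := ((γ : Matrix (Fin 2) (Fin 2) ℝ) 0 0 : ℝ)
     letI b : ℂ := ((γ : Matrix (Fin 2) (Fin 2) ℝ) 0 1 : ℝ)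
     letI c : ℂ := ((γ : Matrix (Fin 2) (Fin 2) ℝ) 1 0 : ℝ)
     letI d : ℂ := ((γ : Matrix (Fin 2) (Fin 2) ℝ) 1 1 : ℝ)
     xiOp k (fun w => (c * w + d) ^ (-k) * f ((a * w + b) / (c * w + d))) z
       = (c * z + d) ^ (k - 2) * xiOp k f ((a * z + b) / (c * z + d))) := by
  have hdet : (γ : Matrix (Fin 2) (Fin 2) ℝ) 0 0 * (γ : Matrix (Fin 2) (Fin 2) ℝ) 1 1
      - (γ : Matrix (Fin 2) (Fin 2) ℝ) 0 1 * (γ : Matrix (Fin 2) (Fin 2) ℝ) 1 0 = 1 := by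
    have h := γ.property
    rw [Matrix.det_fin_two] at h
    exact h
  exact xi_aux k f hf _ _ _ _ hdet z hz
end

section
/- Suppose sequences of smooth functions (G_n)_{n≥0} and (F_n)_{n≥0} on ℍ satisfy, for an integer k ≥ 2 and all n ≥ 0: ξ_k G_n = (k−1)(−1)^{n−1} F'_{n−1} + (−1)^{n−2} F'_{n−2} and ξ_{2−k} F_n^− = G_n, where F_n^− = (−1)^n F_n (with F_{−1} = F_{−2} ≡ 0), as in Proposition 8.3 of the paper. Define G̃_n = Σ_{ℓ=0}^n (−1)^ℓ c_{n,ℓ} G_{n−ℓ} and F̃_n = (−1)^n Σ_{ℓ=0}^n conj(c_{n,ℓ}) F_{n−ℓ}, where the constants satisfy c_{n,0}=1, c_{n,−1}=0, and c_{n,ℓ} = (1/(k−1)) c_{n,ℓ−1} + c_{n−1,ℓ}. Then ξ_k G̃_n = (k−1) F̃_{n−1} and ξ_{2−k} F̃_n = G̃_n for all n ≥ 1. -/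
open scoped BigOperators

/-- Modified Taylor basis "ramp" relations: if conjugate-linear additive operators
`Ξk` (of weight `k`) and `Ξ2k` (of weight `2−k`) satisfy
`Ξk G_n = (k−1)(−1)^{n−1} F_{n−1} + (−1)^{n−2} F_{n−2}` and `Ξ2k((−1)^n F_n) = G_n`,
and the real constants `c_{n,ℓ}` satisfy `c_{n,0} = 1` and
`c_{n,ℓ} = (1/(k−1)) c_{n,ℓ−1} + c_{n−1,ℓ}`, then the modified functions
`G̃_n = Σ_ℓ (−1)^ℓ c_{n,ℓ} G_{n−ℓ}` and `F̃_n = (−1)^n Σ_ℓ c_{n,ℓ} F_{n−ℓ}` satisfy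
`Ξk G̃_n = (k−1) F̃_{n−1}` and `Ξ2k F̃_n = G̃_n` for all `n ≥ 1`. -/
theorem modified_basis_ramp_relations {V : Type*} [AddCommGroup V] [Module ℂ V]
    (k : ℤ) (hk : 2 ≤ k)
    (Ξk Ξ2k : V → V)
    (hΞk_add : ∀ u v : V, Ξk (u + v) = Ξk u + Ξk v)
    (hΞk_smul : ∀ (α : ℂ) (v : V), Ξk (α • v) = (starRingEnd ℂ α) • Ξk v)
    (hΞ2k_add : ∀ u v : V, Ξ2k (u + v) = Ξ2k u + Ξ2k v)
    (hΞ2k_smul : ∀ (α : ℂ) (v : V), Ξ2k (α • v) = (starRingEnd ℂ α) • Ξ2k v)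
    (G F : ℕ → V)
    (hG0 : Ξk (G 0) = 0)
    (hG1 : Ξk (G 1) = ((k : ℂ) - 1) • F 0)
    (hG : ∀ n : ℕ, Ξk (G (n + 2))
      = ((-1 : ℂ) ^ (n + 1) * ((k : ℂ) - 1)) • F (n + 1) + ((-1 : ℂ) ^ n) • F n)
    (hF : ∀ n : ℕ, Ξ2k (((-1 : ℂ) ^ n) • F n) = G n)
    (c : ℕ → ℕ → ℝ)
    (hc0 : ∀ n : ℕ, c n 0 = 1)
    (hcrec : ∀ n ℓ : ℕ, 1 ≤ ℓ → ℓ ≤ n →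
      c n ℓ = (1 / ((k : ℝ) - 1)) * c n (ℓ - 1) + c (n - 1) ℓ) :
    ∀ n : ℕ, 1 ≤ n →
      (Ξk (∑ ℓ ∈ Finset.range (n + 1), ((-1 : ℂ) ^ ℓ * (c n ℓ : ℂ)) • G (n - ℓ))
        = ((k : ℂ) - 1) •
            ((-1 : ℂ) ^ (n - 1) •
              ∑ ℓ ∈ Finset.range n, ((c (n - 1) ℓ : ℂ)) • F (n - 1 - ℓ))) ∧
      (Ξ2k ((-1 : ℂ) ^ n • ∑ ℓ ∈ Finset.range (n + 1), ((c n ℓ : ℂ)) • F (n - ℓ))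
        = ∑ ℓ ∈ Finset.range (n + 1), ((-1 : ℂ) ^ ℓ * (c n ℓ : ℂ)) • G (n - ℓ)) := by
  have hk1 : ((k:ℝ) - 1) ≠ 0 := by
    have : (2:ℝ) ≤ (k:ℝ) := by exact_mod_cast hk
    linarith
  have Ξk_sum : ∀ (s : Finset ℕ) (f : ℕ → V),
      Ξk (∑ i ∈ s, f i) = ∑ i ∈ s, Ξk (f i) :=
    fun s f => map_sum (AddMonoidHom.mk' Ξk hΞk_add) f s
  have Ξ2k_sum : ∀ (s : Finset ℕ) (f : ℕ → V),
      Ξ2k (∑ i ∈ s, f i) = ∑ i ∈ s, Ξ2k (f i) :=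
    fun s f => map_sum (AddMonoidHom.mk' Ξ2k hΞ2k_add) f s
  -- Ξ2k on F alone
  have hF' : ∀ j : ℕ, Ξ2k (F j) = ((-1:ℂ)^j) • G j := by
    intro j
    have h := hF j
    rw [hΞ2k_smul] at h
    have hc : (starRingEnd ℂ) ((-1:ℂ)^j) = (-1:ℂ)^j := by simp
    rw [hc] at h
    have := congrArg (fun v => ((-1:ℂ)^j) • v) h
    simpa [smul_smul, ← pow_add, ← two_mul, pow_mul] using this
  intro n hn
  obtain ⟨m, rfl⟩ : ∃ m, n = m + 1 := ⟨n - 1, by omega⟩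
  constructor
  · -- first identity
    simp only [Nat.add_sub_cancel]
    set D : ℕ → V := fun j => if j = 0 then (0:V) else -F (j-1) with hD
    have hGall : ∀ j : ℕ, Ξk (G (j+1))
        = ((-1:ℂ)^j * ((k:ℂ)-1)) • F j + ((-1:ℂ)^j) • D j := by
      intro j
      cases j with
      | zero => simp [hD, hG1]
      | succ i =>
        rw [hG i]
        simp only [hD, Nat.succ_ne_zero, if_false, Nat.add_sub_cancel]
        rw [smul_neg]
        congr 1
        rw [pow_succ]
        simp [neg_smul]
    have step1 : ∀ ℓ ∈ Finset.range (m+2),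
        Ξk (((-1:ℂ)^ℓ * (c (m+1) ℓ : ℂ)) • G (m+1-ℓ))
          = ((-1:ℂ)^ℓ * (c (m+1) ℓ : ℂ)) • Ξk (G (m+1-ℓ)) := by
      intro ℓ _
      rw [hΞk_smul]
      congr 1
      simp
    rw [Ξk_sum, Finset.sum_congr rfl step1, Finset.sum_range_succ]
    simp only [Nat.sub_self, hG0, smul_zero, add_zero]
    have step2 : ∀ ℓ ∈ Finset.range (m+1),
        ((-1:ℂ)^ℓ * (c (m+1) ℓ : ℂ)) • Ξk (G (m+1-ℓ))
          = ((-1:ℂ)^m * ((k:ℂ)-1) * (c (m+1) ℓ : ℂ)) • F (m-ℓ)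
            + ((-1:ℂ)^m * (c (m+1) ℓ : ℂ)) • D (m-ℓ) := by
      intro ℓ hℓ
      have hℓm : ℓ ≤ m := Nat.lt_succ_iff.mp (Finset.mem_range.mp hℓ)
      have h1 : m + 1 - ℓ = (m - ℓ) + 1 := by omega
      have hpow : (-1:ℂ)^ℓ * (-1:ℂ)^(m-ℓ) = (-1:ℂ)^m := by
        rw [← pow_add, Nat.add_sub_cancel' hℓm]
      rw [h1, hGall, smul_add, smul_smul, smul_smul]
      congr 2
      · linear_combination (((k:ℂ)-1) * (c (m+1) ℓ : ℂ)) * hpow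
      · linear_combination ((c (m+1) ℓ : ℂ)) * hpow
    rw [Finset.sum_congr rfl step2, Finset.sum_add_distrib]
    have stepB : ∑ ℓ ∈ Finset.range (m+1), ((-1:ℂ)^m * (c (m+1) ℓ : ℂ)) • D (m-ℓ)
        = ∑ ℓ ∈ Finset.range (m+1),
            (if ℓ = 0 then (0:ℂ) else -((-1:ℂ)^m * (c (m+1) (ℓ-1) : ℂ))) • F (m-ℓ) := by
      rw [Finset.sum_range_succ, Finset.sum_range_succ'
        (fun ℓ => (if ℓ = 0 then (0:ℂ) else -((-1:ℂ)^m * (c (m+1) (ℓ-1) : ℂ))) • F (m-ℓ)) m]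
      have e1 : ((-1:ℂ)^m * (c (m+1) m : ℂ)) • D (m - m) = 0 := by simp [hD]
      have e2 : (if (0:ℕ) = 0 then (0:ℂ)
          else -((-1:ℂ)^m * (c (m+1) (0-1) : ℂ))) • F (m - 0) = 0 := by
        rw [if_pos rfl, zero_smul]
      rw [e1, add_zero, e2, add_zero]
      apply Finset.sum_congr rfl
      intro i hi
      have him : i < m := Finset.mem_range.mp hi
      have h2 : m - i ≠ 0 := by omega
      have h3 : m - i - 1 = m - (i + 1) := by omega
      rw [if_neg (Nat.succ_ne_zero i), Nat.add_sub_cancel, hD]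
      simp only [if_neg h2, h3, smul_neg, neg_smul]
    rw [stepB, ← Finset.sum_add_distrib]
    have hrhs : ((k:ℂ) - 1) • ((-1:ℂ)^m • ∑ ℓ ∈ Finset.range (m+1), ((c m ℓ : ℂ)) • F (m-ℓ))
        = ∑ ℓ ∈ Finset.range (m+1), (((k:ℂ)-1) * (-1:ℂ)^m * (c m ℓ : ℂ)) • F (m-ℓ) := by
      rw [smul_smul, Finset.smul_sum]
      exact Finset.sum_congr rfl fun ℓ _ => by rw [smul_smul, mul_assoc]
    rw [hrhs]
    apply Finset.sum_congr rfl
    intro ℓ hℓ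
    have hℓm : ℓ ≤ m := Nat.lt_succ_iff.mp (Finset.mem_range.mp hℓ)
    rw [← add_smul]
    congr 1
    rcases Nat.eq_zero_or_pos ℓ with h0 | hpos
    · subst h0
      simp only [if_pos rfl, add_zero, hc0]
      push_cast
      ring
    · rw [if_neg (by omega : ℓ ≠ 0)]
      have hr := hcrec (m+1) ℓ hpos (by omega)
      simp only [Nat.add_sub_cancel] at hr
      have hr2 : ((k:ℝ)-1) * c (m+1) ℓ - c (m+1) (ℓ-1) = ((k:ℝ)-1) * c m ℓ := by
        field_simp at hr
        linarith [hr]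
      have hr3 : ((k:ℂ)-1) * (c (m+1) ℓ : ℂ) - (c (m+1) (ℓ-1) : ℂ)
          = ((k:ℂ)-1) * (c m ℓ : ℂ) := by
        exact_mod_cast congrArg (Complex.ofReal) hr2
      linear_combination ((-1:ℂ)^m) * hr3
  · -- second identity
    rw [Finset.smul_sum, Ξ2k_sum]
    apply Finset.sum_congr rfl
    intro ℓ hℓ
    have hℓm : ℓ ≤ m + 1 := Nat.lt_succ_iff.mp (Finset.mem_range.mp hℓ)
    rw [smul_smul, hΞ2k_smul, hF', smul_smul]
    congr 1
    have hc : (starRingEnd ℂ) ((-1:ℂ)^(m+1) * (c (m+1) ℓ : ℂ))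
        = (-1:ℂ)^(m+1) * (c (m+1) ℓ : ℂ) := by simp
    rw [hc]
    have hexp : (m+1) + ((m+1) - ℓ) = ℓ + 2 * ((m+1) - ℓ) := by omega
    rw [mul_assoc, mul_comm ((c (m+1) ℓ : ℂ)) _, ← mul_assoc, ← pow_add, hexp,
      pow_add, pow_mul]
    simp
end
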